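/- Let Ω be a bounded open convex subset of ℝⁿ and let d denote its Hilbert distance. Then d is a metric on Ω: for all x, y, z ∈ Ω one has d(x,y) ≥ 0, d(x,y) = 0 if and only if x = y, d(x,y) = d(y,x), and d(x,y) ≤ d(x,z) + d(z,y). -/

import Mathlib

/-- The predicate that `d` is the Hilbert distance of the bounded open convex set `Ω`:
`d x x = 0`, and for distinct `x y ∈ Ω` there are frontier points `x̄` (with `x`
strictly between `x̄` and `y`) and `ȳ` (with `y` strictly between `x` and `ȳ`) such that
`d x y = log ((‖ȳ - x‖/‖ȳ - y‖) * (‖x̄ - y‖/‖x̄ - x‖))`. -/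
def IsHilbertDist {n : ℕ} (Ω : Set (EuclideanSpace ℝ (Fin n)))
    (d : EuclideanSpace ℝ (Fin n) → EuclideanSpace ℝ (Fin n) → ℝ) : Prop :=
  (∀ x, d x x = 0) ∧
  ∀ x ∈ Ω, ∀ y ∈ Ω, x ≠ y →
    ∃ xb ∈ frontier Ω, ∃ yb ∈ frontier Ω,
      x ∈ openSegment ℝ xb y ∧ y ∈ openSegment ℝ x yb ∧
      d x y = Real.log ((‖yb - x‖ / ‖yb - y‖) * (‖xb - y‖ / ‖xb - x‖))

/-- The `(n+1) × (n+1)` block matrix `[[A, b], [cᵀ, δ]]`. -/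
noncomputable def projMat {n : ℕ} (A : Matrix (Fin n) (Fin n) ℝ)
    (b c : EuclideanSpace ℝ (Fin n)) (δ : ℝ) :
    Matrix (Fin n ⊕ Fin 1) (Fin n ⊕ Fin 1) ℝ :=
  Matrix.fromBlocks A (Matrix.replicateCol (Fin 1) (WithLp.equiv 2 (Fin n → ℝ) b))
    (Matrix.replicateRow (Fin 1) (WithLp.equiv 2 (Fin n → ℝ) c)) (Matrix.of fun _ _ => δ)

/-- The fractional linear map `x ↦ (A·x + b) / (⟨c,x⟩ + δ)`. -/
noncomputable def fracLin {n : ℕ} (A : Matrix (Fin n) (Fin n) ℝ)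
    (b c : EuclideanSpace ℝ (Fin n)) (δ : ℝ)
    (x : EuclideanSpace ℝ (Fin n)) : EuclideanSpace ℝ (Fin n) :=
  ((∑ i, c i * x i) + δ)⁻¹ • ((WithLp.equiv 2 (Fin n → ℝ)).symm (A.mulVec x) + b)

/-- `f` is the restriction to `U` of a projective transformation of `ℝPⁿ`:
it has fractional linear form `x ↦ (A·x + b)/(⟨c,x⟩ + δ)` on `U`, with the block matrix
`[[A, b],[cᵀ, δ]]` invertible and the denominator nonvanishing on `U`. -/
def IsProjectiveRestriction {n : ℕ} (U : Set (EuclideanSpace ℝ (Fin n)))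
    (f : EuclideanSpace ℝ (Fin n) → EuclideanSpace ℝ (Fin n)) : Prop :=
  ∃ (A : Matrix (Fin n) (Fin n) ℝ) (b c : EuclideanSpace ℝ (Fin n)) (δ : ℝ),
    (projMat A b c δ).det ≠ 0 ∧
    ∀ x ∈ U, ((∑ i, c i * x i) + δ ≠ 0) ∧ f x = fracLin A b c δ x


/-! The Hilbert distance is the symmetrization `F x y + F y x` of the Funk distance
`F x y = log (‖ȳ - x‖ / ‖ȳ - y‖)`. Each ratio exceeds `1`, which gives positivity; a ray from a
point of an open convex set meets its frontier only once, which gives symmetry. For the triangle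
inequality of `F`, separate `ȳ` from `Ω` by a hyperplane `f = c` with `f < c` on `Ω`: on the ray
through `ȳ` the ratio equals `(c - f x) / (c - f y)`, on any other ray it is at least the
corresponding quotient, and these quotients telescope through `z`. -/

open Real Set

section Funk

variable {E : Type*} [NormedAddCommGroup E] [NormedSpace ℝ E]

noncomputable def funkRatio (p q b : E) : ℝ := ‖b - p‖ / ‖b - q‖

lemma exists_funkRatio_eq_inv {p q b : E} (h : q ∈ openSegment ℝ p b) (hpq : p ≠ q) :
    ∃ a ∈ Ioo (0 : ℝ) 1, b - q = a • (b - p) ∧ funkRatio p q b = a⁻¹ := by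
  obtain ⟨a, t, ha, ht, hat, rfl⟩ := h
  have hbq : b - (a • p + t • b) = a • (b - p) := by
    rw [eq_sub_of_add_eq' hat]; module
  have hbp : b - p ≠ 0 := by
    rintro hbp
    rw [sub_eq_zero.mp hbp, Convex.combo_self hat] at hpq
    exact hpq rfl
  refine ⟨a, ⟨ha, by linarith⟩, hbq, ?_⟩
  rw [funkRatio, hbq, norm_smul, norm_of_nonneg ha.le]
  field_simp

lemma one_lt_funkRatio {p q b : E} (h : q ∈ openSegment ℝ p b) (hpq : p ≠ q) :
    1 < funkRatio p q b := by
  obtain ⟨a, ⟨ha0, ha1⟩, -, hr⟩ := exists_funkRatio_eq_inv h hpq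
  rw [hr]
  exact (one_lt_inv₀ ha0).mpr ha1

lemma funkRatio_pos {p q b : E} (h : q ∈ openSegment ℝ p b) (hpq : p ≠ q) :
    0 < funkRatio p q b :=
  zero_lt_one.trans (one_lt_funkRatio h hpq)

lemma funkRatio_eq_div {p q b : E} (h : q ∈ openSegment ℝ p b) (hpq : p ≠ q)
    (f : E →ₗ[ℝ] ℝ) (hf : f p ≠ f b) :
    funkRatio p q b = (f b - f p) / (f b - f q) := by
  obtain ⟨a, ⟨ha0, -⟩, hbq, hr⟩ := exists_funkRatio_eq_inv h hpq
  have hfbq : f b - f q = a * (f b - f p) := by simpa using congrArg f hbq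
  rw [hr, hfbq]
  field_simp [sub_ne_zero.mpr hf.symm]

lemma div_le_funkRatio {p q b : E} (h : q ∈ openSegment ℝ p b) (hpq : p ≠ q)
    (f : E →ₗ[ℝ] ℝ) {c : ℝ} (hp : f p < c) (hb : f b ≤ c) :
    (c - f p) / (c - f q) ≤ funkRatio p q b := by
  obtain ⟨a, ⟨ha0, ha1⟩, hbq, hr⟩ := exists_funkRatio_eq_inv h hpq
  have hfbq : f b - f q = a * (f b - f p) := by simpa using congrArg f hbq
  have hfq : a * (c - f p) ≤ c - f q := by nlinarith
  have hq : 0 < c - f q := (mul_pos ha0 (sub_pos.mpr hp)).trans_le hfq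
  rw [hr, div_le_iff₀ hq, ← div_eq_inv_mul, le_div_iff₀ ha0]
  linarith

end Funk

section Frontier

variable {E : Type*} [NormedAddCommGroup E] [NormedSpace ℝ E] {Ω : Set E}

lemma eq_of_mem_segment_of_mem_frontier (hO : IsOpen Ω) (hC : Convex ℝ Ω) {x b b' : E}
    (hx : x ∈ Ω) (hb : b ∈ frontier Ω) (hb' : b' ∈ frontier Ω) (h : b ∈ segment ℝ x b') :
    b = b' := by
  by_contra hne
  have hxb : x ≠ b := fun e => disjoint_left.mp (disjoint_frontier_iff_isOpen.mpr hO) hb (e ▸ hx)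
  exact hb.2 <| hC.openSegment_interior_closure_subset_interior (hO.interior_eq.symm ▸ hx)
    (frontier_subset_closure hb') (mem_openSegment_of_ne_left_right hxb (Ne.symm hne) h)

lemma eq_of_mem_openSegment_of_mem_frontier (hO : IsOpen Ω) (hC : Convex ℝ Ω)
    {x y b b' : E} (hx : x ∈ Ω) (hb : b ∈ frontier Ω) (hb' : b' ∈ frontier Ω)
    (h : y ∈ openSegment ℝ x b) (h' : y ∈ openSegment ℝ x b') : b = b' := by
  rw [openSegment_eq_image'] at h h'
  obtain ⟨θ, ⟨hθ0, -⟩, rfl⟩ := h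
  obtain ⟨θ', ⟨hθ'0, -⟩, he⟩ := h'
  wlog hθ : θ' ≤ θ generalizing b b' θ θ'
  · exact (this hb' hb θ' hθ'0 θ he.symm hθ0 (le_of_not_ge hθ)).symm
  refine eq_of_mem_segment_of_mem_frontier hO hC hx hb hb' ?_
  rw [segment_eq_image']
  have hsmul : θ • (b - x) = θ' • (b' - x) := add_left_cancel he.symm
  refine ⟨θ' / θ, ⟨by positivity, div_le_one_of_le₀ hθ hθ0.le⟩, ?_⟩
  change x + (θ' / θ) • (b' - x) = b
  rw [div_eq_inv_mul, mul_smul, ← hsmul, smul_smul, inv_mul_cancel₀ hθ0.ne', one_smul,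
    add_sub_cancel]

lemma funkRatio_le_mul (hO : IsOpen Ω) (hC : Convex ℝ Ω) {x y z yb zb yb' : E}
    (hx : x ∈ Ω) (hy : y ∈ Ω) (hz : z ∈ Ω) (hyb : yb ∈ frontier Ω) (hzb : zb ∈ frontier Ω)
    (hyb' : yb' ∈ frontier Ω) (hxy : x ≠ y) (hxz : x ≠ z) (hzy : z ≠ y)
    (h : y ∈ openSegment ℝ x yb) (hxzb : z ∈ openSegment ℝ x zb)
    (hzyb' : y ∈ openSegment ℝ z yb') :
    funkRatio x y yb ≤ funkRatio x z zb * funkRatio z y yb' := by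
  obtain ⟨f, hf⟩ := geometric_hahn_banach_open_point hC hO
    (disjoint_left.mp (disjoint_frontier_iff_isOpen.mpr hO) hyb)
  have hf_frontier : ∀ b ∈ frontier Ω, f b ≤ f yb := fun b hb =>
    closure_minimal (fun a ha => (hf a ha).le) (isClosed_le f.continuous continuous_const)
      (frontier_subset_closure hb)
  have hz' : 0 < f yb - f z := sub_pos.mpr (hf z hz)
  have hy' : 0 < f yb - f y := sub_pos.mpr (hf y hy)
  calc funkRatio x y yb = (f yb - f x) / (f yb - f y) :=
        funkRatio_eq_div h hxy f (hf x hx).ne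
    _ = (f yb - f x) / (f yb - f z) * ((f yb - f z) / (f yb - f y)) := by field_simp
    _ ≤ funkRatio x z zb * funkRatio z y yb' :=
        mul_le_mul (div_le_funkRatio hxzb hxz f (hf x hx) (hf_frontier zb hzb))
          (div_le_funkRatio hzyb' hzy f (hf z hz) (hf_frontier yb' hyb')) (by positivity)
          (funkRatio_pos hxzb hxz).le

end Frontier

namespace IsHilbertDist

variable {n : ℕ} {Ω : Set (EuclideanSpace ℝ (Fin n))}
  {d : EuclideanSpace ℝ (Fin n) → EuclideanSpace ℝ (Fin n) → ℝ}

lemma exists_eq_log_funkRatio_add (hd : IsHilbertDist Ω d) {x y : EuclideanSpace ℝ (Fin n)}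
    (hx : x ∈ Ω) (hy : y ∈ Ω) (hxy : x ≠ y) :
    ∃ xb ∈ frontier Ω, ∃ yb ∈ frontier Ω, x ∈ openSegment ℝ y xb ∧ y ∈ openSegment ℝ x yb ∧
      d x y = log (funkRatio x y yb) + log (funkRatio y x xb) := by
  obtain ⟨xb, hxb, yb, hyb, hx', hy', hdxy⟩ := hd.2 x hx y hy hxy
  rw [openSegment_symm] at hx'
  refine ⟨xb, hxb, yb, hyb, hx', hy', ?_⟩
  rw [hdxy, ← log_mul (funkRatio_pos hy' hxy).ne' (funkRatio_pos hx' hxy.symm).ne']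
  rfl

lemma pos (hd : IsHilbertDist Ω d) {x y : EuclideanSpace ℝ (Fin n)} (hx : x ∈ Ω) (hy : y ∈ Ω)
    (hxy : x ≠ y) : 0 < d x y := by
  obtain ⟨xb, -, yb, -, hx', hy', hdxy⟩ := hd.exists_eq_log_funkRatio_add hx hy hxy
  rw [hdxy]
  exact add_pos (log_pos (one_lt_funkRatio hy' hxy)) (log_pos (one_lt_funkRatio hx' hxy.symm))

lemma nonneg (hd : IsHilbertDist Ω d) {x y : EuclideanSpace ℝ (Fin n)} (hx : x ∈ Ω)
    (hy : y ∈ Ω) : 0 ≤ d x y := by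
  rcases eq_or_ne x y with rfl | hxy
  · exact (hd.1 x).ge
  · exact (hd.pos hx hy hxy).le

lemma symm (hd : IsHilbertDist Ω d) (hO : IsOpen Ω) (hC : Convex ℝ Ω)
    {x y : EuclideanSpace ℝ (Fin n)} (hx : x ∈ Ω) (hy : y ∈ Ω) : d x y = d y x := by
  rcases eq_or_ne x y with rfl | hxy
  · rfl
  obtain ⟨xb, hxb, yb, hyb, hx', hy', hdxy⟩ := hd.exists_eq_log_funkRatio_add hx hy hxy
  obtain ⟨yb₁, hyb₁, xb₁, hxb₁, hy₁, hx₁, hdyx⟩ := hd.exists_eq_log_funkRatio_add hy hx hxy.symm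
  rw [hdxy, hdyx, eq_of_mem_openSegment_of_mem_frontier hO hC hx hyb hyb₁ hy' hy₁,
    eq_of_mem_openSegment_of_mem_frontier hO hC hy hxb hxb₁ hx' hx₁, add_comm]

lemma triangle (hd : IsHilbertDist Ω d) (hO : IsOpen Ω) (hC : Convex ℝ Ω)
    {x y z : EuclideanSpace ℝ (Fin n)} (hx : x ∈ Ω) (hy : y ∈ Ω) (hz : z ∈ Ω) :
    d x y ≤ d x z + d z y := by
  rcases eq_or_ne x z with rfl | hxz
  · linarith [hd.1 x]
  rcases eq_or_ne z y with rfl | hzy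
  · linarith [hd.1 z]
  rcases eq_or_ne x y with rfl | hxy
  · linarith [hd.1 x, hd.nonneg hx hz, hd.nonneg hz hx]
  obtain ⟨xb, hxb, yb, hyb, hx', hy', hdxy⟩ := hd.exists_eq_log_funkRatio_add hx hy hxy
  obtain ⟨xb₁, hxb₁, zb₁, hzb₁, hx₁, hz₁, hdxz⟩ := hd.exists_eq_log_funkRatio_add hx hz hxz
  obtain ⟨zb₂, hzb₂, yb₂, hyb₂, hz₂, hy₂, hdzy⟩ := hd.exists_eq_log_funkRatio_add hz hy hzy
  have hlog : ∀ {a b c : ℝ}, 0 < a → 0 < b → 0 < c → a ≤ b * c → log a ≤ log b + log c :=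
    fun ha hb hc h => log_mul hb.ne' hc.ne' ▸ log_le_log ha h
  have hforward := hlog (funkRatio_pos hy' hxy) (funkRatio_pos hz₁ hxz) (funkRatio_pos hy₂ hzy)
    (funkRatio_le_mul hO hC hx hy hz hyb hzb₁ hyb₂ hxy hxz hzy hy' hz₁ hy₂)
  have hbackward := hlog (funkRatio_pos hx' hxy.symm) (funkRatio_pos hz₂ hzy.symm)
    (funkRatio_pos hx₁ hxz.symm)
    (funkRatio_le_mul hO hC hy hx hz hxb hzb₂ hxb₁ hxy.symm hzy.symm hxz.symm hx' hz₂ hx₁)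
  rw [hdxy, hdxz, hdzy]
  linarith

end IsHilbertDist

theorem hilbert_dist_is_metric_general {n : ℕ} (Ω : Set (EuclideanSpace ℝ (Fin n)))
    (hO : IsOpen Ω) (hC : Convex ℝ Ω)
    (d : EuclideanSpace ℝ (Fin n) → EuclideanSpace ℝ (Fin n) → ℝ)
    (hd : IsHilbertDist Ω d) :
    ∀ x ∈ Ω, ∀ y ∈ Ω, ∀ z ∈ Ω,
      0 ≤ d x y ∧ (d x y = 0 ↔ x = y) ∧ d x y = d y x ∧ d x y ≤ d x z + d z y := by
  intro x hx y hy z hz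
  refine ⟨hd.nonneg hx hy, ⟨fun h => ?_, fun h => h ▸ hd.1 x⟩, hd.symm hO hC hx hy,
    hd.triangle hO hC hx hy hz⟩
  by_contra hxy
  exact (hd.pos hx hy hxy).ne' h

/-- the Hilbert distance is a metric on `Ω`. -/
theorem hilbert_dist_is_metric {n : ℕ} (Ω : Set (EuclideanSpace ℝ (Fin n)))
    (hne : Ω.Nonempty) (hO : IsOpen Ω) (hB : Bornology.IsBounded Ω) (hC : Convex ℝ Ω)
    (d : EuclideanSpace ℝ (Fin n) → EuclideanSpace ℝ (Fin n) → ℝ)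
    (hd : IsHilbertDist Ω d) :
    ∀ x ∈ Ω, ∀ y ∈ Ω, ∀ z ∈ Ω,
      0 ≤ d x y ∧ (d x y = 0 ↔ x = y) ∧ d x y = d y x ∧ d x y ≤ d x z + d z y :=
  hilbert_dist_is_metric_general Ω hO hC d hd
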